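/- Let I be a monomial ideal in R = K[x_1,...,x_n] and x_w a new variable. If I is normally torsion-free, then x_w · I (in R[x_w]) is normally torsion-free. -/

import Mathlib

open MvPolynomial

/-- `I` is a monomial ideal: it is generated by monomials. -/
def IsMonomialIdeal {K : Type*} [Field K] {n : ℕ} (I : Ideal (MvPolynomial (Fin n) K)) : Prop :=
  ∃ S : Set ((Fin n) →₀ ℕ), I = Ideal.span ((fun d => monomial d (1 : K)) '' S)

/-- `I` is normally torsion-free. -/
def NormallyTorsionFree {R : Type*} [CommRing R] (I : Ideal R) : Prop :=
  ∀ k : ℕ, 1 ≤ k → associatedPrimes R (R ⧸ I ^ k) ⊆ associatedPrimes R (R ⧸ I)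

/-!
Put `A = K[x_1, …, x_n]`, so that `K[x_1, …, x_n, x_w] ≅ A[x]` and `J := x_w · I` becomes
`x · I[x]`, with `J^k = x^k · I^k[x]`. As `x^k` is a nonzerodivisor, multiplication by `x^k`
gives an exact sequence `0 → A[x]/I^k[x] → A[x]/J^k → A[x]/(x^k) → 0`, whence
`Ass(A[x]/J^k) ⊆ Ass(A[x]/I^k[x]) ∪ Ass(A[x]/(x^k))`. The second set is `{(x)}`; the first
consists of the extensions `q[x]` of the primes `q ∈ Ass(A/I^k) ⊆ Ass(A/I)`. For `I ≠ 0`, both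
`(x) = (J : c)` (any `0 ≠ c ∈ I`) and such `q[x]` are associated primes of `A[x]/J`, the latter
because `A[x]/I[x]` embeds into `A[x]/J`, again by multiplication by `x`.

To see that an associated prime `P = (N[x] : f)` of `A[x]/N[x]` is extended from
`q = P ∩ A ∈ Ass(A/N)`, choose the witness `f` so that its reduction mod `N` has minimal degree
`d`. Then `q = (N : f_d)`, since for `a ∉ P` the polynomial `a f` is again a witness, and
comparing coefficients of degree `deg g + d` in `g f` shows that the leading coefficient of any
`g ∈ P` lies in `q`.
-/

open scoped Polynomial nonZeroDivisors

section Colon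

variable {R : Type*} [CommRing R]

theorem colon_bot_quotient_mk (N : Ideal R) (f : R) :
    (⊥ : Submodule R (R ⧸ N)).colon {Submodule.Quotient.mk f} = N.colon {f} := by
  ext r
  rw [Submodule.mem_colon_singleton, Submodule.mem_colon_singleton, Submodule.mem_bot,
    ← Submodule.Quotient.mk_smul, Submodule.Quotient.mk_eq_zero]

theorem mem_associatedPrimes_quotient_iff [IsNoetherianRing R] {N P : Ideal R} :
    P ∈ associatedPrimes R (R ⧸ N) ↔ P.IsPrime ∧ ∃ f : R, P = N.colon {f} := by
  rw [AssociatedPrimes.mem_iff, isAssociatedPrime_iff, (Submodule.mkQ_surjective N).exists]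
  simp only [Submodule.mkQ_apply, colon_bot_quotient_mk]

theorem eq_colon_singleton_mul_of_notMem {M P : Ideal R} [P.IsPrime] {f h : R}
    (hP : P = M.colon {f}) (hh : h ∉ P) : P = M.colon {h * f} := by
  ext y
  rw [Submodule.mem_colon_singleton, smul_eq_mul, ← mul_assoc, ← smul_eq_mul,
    ← Submodule.mem_colon_singleton, ← hP, Ideal.IsPrime.mul_mem_right_iff hh]

theorem comap_colon_singleton_ringEquiv {S : Type*} [CommRing S] (e : R ≃+* S) (N : Ideal S)
    (f : S) : (N.colon {f}).comap e = (N.comap e).colon {e.symm f} := by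
  ext r
  simp only [Ideal.mem_comap, Submodule.mem_colon_singleton, smul_eq_mul, map_mul,
    RingEquiv.apply_symm_apply]

theorem comap_mem_associatedPrimes_quotient {S : Type*} [CommRing S] [IsNoetherianRing R]
    [IsNoetherianRing S] (e : R ≃+* S) {N P : Ideal S} (hP : P ∈ associatedPrimes S (S ⧸ N)) :
    P.comap e ∈ associatedPrimes R (R ⧸ N.comap e) := by
  obtain ⟨_, f, rfl⟩ := mem_associatedPrimes_quotient_iff.mp hP
  exact mem_associatedPrimes_quotient_iff.mpr
    ⟨Ideal.comap_isPrime _ _, e.symm f, comap_colon_singleton_ringEquiv e N f⟩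

end Colon

theorem NormallyTorsionFree.comap_ringEquiv {R S : Type*} [CommRing R] [CommRing S]
    [IsNoetherianRing R] [IsNoetherianRing S] (e : R ≃+* S) {I : Ideal S}
    (hI : NormallyTorsionFree I) : NormallyTorsionFree (I.comap e) := by
  have comap_comap_symm : ∀ J : Ideal S, (J.comap e).comap e.symm = J := fun J => by
    rw [Ideal.comap_symm, Ideal.map_comap_of_surjective _ e.surjective]
  have comap_symm_comap : ∀ J : Ideal R, (J.comap e.symm).comap e = J := fun J => by
    rw [Ideal.comap_symm, Ideal.comap_map_of_bijective _ e.bijective]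
  intro k hk P hP
  rw [← Ideal.map_symm, ← Ideal.map_pow, Ideal.map_symm] at hP
  have hP' := comap_mem_associatedPrimes_quotient e.symm hP
  rw [comap_comap_symm] at hP'
  simpa only [comap_symm_comap] using comap_mem_associatedPrimes_quotient e (hI k hk hP')

section MulLeft

open Ideal

variable {R : Type*} [CommRing R]

def quotientMulLeft (a : R) (M : Ideal R) : R ⧸ M →ₗ[R] R ⧸ (span {a} * M) :=
  M.mapQ _ (LinearMap.mulLeft R a) fun _ hx => mul_mem_mul (mem_span_singleton_self a) hx

theorem quotientMulLeft_mk (a : R) (M : Ideal R) (x : R) :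
    quotientMulLeft a M (Submodule.Quotient.mk x) = Submodule.Quotient.mk (a * x) := rfl

theorem quotientMulLeft_injective {a : R} (ha : a ∈ R⁰) (M : Ideal R) :
    Function.Injective (quotientMulLeft a M) := by
  rw [← LinearMap.ker_eq_bot, LinearMap.ker_eq_bot']
  intro y hy
  induction y using Submodule.Quotient.induction_on with | _ x => ?_
  rw [quotientMulLeft_mk, Submodule.Quotient.mk_eq_zero, mem_span_singleton_mul] at hy
  obtain ⟨z, hz, hza⟩ := hy
  rwa [Submodule.Quotient.mk_eq_zero, ← (mul_cancel_left_mem_nonZeroDivisors ha).mp hza]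

theorem exact_quotientMulLeft_factor (a : R) (M : Ideal R) :
    Function.Exact (quotientMulLeft a M)
      (Submodule.factor (mul_le_left : span {a} * M ≤ span {a})) := by
  intro y
  induction y using Submodule.Quotient.induction_on with | _ x => ?_
  change Submodule.Quotient.mk x = (0 : R ⧸ span {a}) ↔ _
  rw [Submodule.Quotient.mk_eq_zero, mem_span_singleton']
  constructor
  · rintro ⟨u, rfl⟩
    exact ⟨Submodule.Quotient.mk u, by rw [quotientMulLeft_mk, mul_comm u]⟩
  · rintro ⟨z, hz⟩
    induction z using Submodule.Quotient.induction_on with | _ u => ?_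
    rw [quotientMulLeft_mk, Submodule.Quotient.eq] at hz
    obtain ⟨v, -, hv⟩ := mem_span_singleton_mul.mp hz
    exact ⟨u - v, by rw [sub_mul, mul_comm v, hv]; ring⟩

theorem associatedPrimes_quotient_subset_span_mul {a : R} (ha : a ∈ R⁰) (M : Ideal R) :
    associatedPrimes R (R ⧸ M) ⊆ associatedPrimes R (R ⧸ span {a} * M) :=
  associatedPrimes.subset_of_injective (quotientMulLeft_injective ha M)

theorem associatedPrimes_quotient_span_mul_subset {a : R} (ha : a ∈ R⁰) (M : Ideal R) :
    associatedPrimes R (R ⧸ span {a} * M) ⊆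
      associatedPrimes R (R ⧸ M) ∪ associatedPrimes R (R ⧸ span {a}) :=
  associatedPrimes.subset_union_of_exact (quotientMulLeft_injective ha M)
    (exact_quotientMulLeft_factor a M)

theorem span_singleton_mem_associatedPrimes_quotient_span_mul {p c : R} (hp : Prime p)
    {M : Ideal R} (hcM : c ∈ M) (hpc : ¬p ∣ c) :
    span {p} ∈ associatedPrimes R (R ⧸ span {p} * M) := by
  have hprime : (span {p}).IsPrime := (span_singleton_prime hp.ne_zero).mpr hp
  refine ⟨hprime, Submodule.Quotient.mk c, ?_⟩
  suffices h : (span {p} * M).colon {c} = span {p} by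
    rw [colon_bot_quotient_mk, h, hprime.radical]
  ext r
  rw [Submodule.mem_colon_singleton, smul_eq_mul, mem_span_singleton]
  constructor
  · intro h
    exact (hp.dvd_or_dvd (mem_span_singleton.mp (mul_le_left h))).resolve_right hpc
  · rintro ⟨s, rfl⟩
    rw [mul_assoc]
    exact mul_mem_mul (mem_span_singleton_self p) (M.mul_mem_left s hcM)

theorem associatedPrimes_quotient_span_pow_subset [IsDomain R] {p : R} (hp : Prime p) (k : ℕ) :
    associatedPrimes R (R ⧸ span {p ^ k}) ⊆ {span {p}} := by
  rintro P ⟨hP, x, hx⟩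
  induction x using Submodule.Quotient.induction_on with | _ f => ?_
  have hmem : ∀ r, r ∈ P ↔ ∃ m, p ^ k ∣ r ^ m * f := fun r => by
    simp only [hx, colon_bot_quotient_mk, Ideal.mem_radical_iff, Submodule.mem_colon_singleton,
      smul_eq_mul, mem_span_singleton]
  have hf : ¬p ^ k ∣ f := fun h =>
    hP.ne_top ((eq_top_iff_one P).mpr ((hmem 1).mpr ⟨0, by simpa using h⟩))
  refine Set.mem_singleton_iff.mpr (le_antisymm (fun r hr => ?_) ?_)
  · obtain ⟨m, hm⟩ := (hmem r).mp hr
    by_contra hpr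
    have hpr_pow : ¬p ∣ r ^ m := fun h => hpr (mem_span_singleton.mpr (hp.dvd_of_dvd_pow h))
    exact hf (hp.pow_dvd_of_dvd_mul_left k hpr_pow hm)
  · rw [span_le, Set.singleton_subset_iff]
    exact (hmem p).mpr ⟨k, dvd_mul_right _ _⟩

end MulLeft

namespace Polynomial

variable {A : Type*} [CommRing A]

theorem map_C_colon_singleton (N : Ideal A) (c : A) :
    (N.colon {c}).map (C : A →+* A[X]) = (N.map C).colon {C c} := by
  ext h
  simp only [Ideal.mem_map_C_iff, Submodule.mem_colon_singleton, smul_eq_mul, coeff_mul_C]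

theorem map_quotientMk_eq_zero_iff {N : Ideal A} {f : A[X]} :
    f.map (Ideal.Quotient.mk N) = 0 ↔ f ∈ N.map C := by
  rw [← coe_mapRingHom, ← RingHom.mem_ker, ker_mapRingHom, Ideal.mk_ker]

theorem exists_comap_C_eq_colon_of_eq_colon {N : Ideal A} {P : Ideal A[X]} [P.IsPrime]
    {f₀ : A[X]} (hf₀ : P = (N.map C).colon {f₀}) :
    ∃ c : A, P.comap C = N.colon {c} ∧ P = (P.comap C).map C := by
  set π := Ideal.Quotient.mk N
  obtain ⟨f, hf : P = _, hmin⟩ := (measure fun f : A[X] => (f.map π).natDegree).wf.has_min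
    {f | P = (N.map C).colon {f}} ⟨f₀, hf₀⟩
  set d := (f.map π).natDegree
  have hmem : ∀ g, g ∈ P ↔ g * f ∈ N.map C := fun g => by
    rw [hf, Submodule.mem_colon_singleton, smul_eq_mul]
  have hcomap_le : P.comap C ≤ N.colon {f.coeff d} := by
    intro a ha
    rw [Submodule.mem_colon_singleton, smul_eq_mul, ← coeff_C_mul]
    exact Ideal.mem_map_C_iff.mp ((hmem _).mp ha) d
  have hle_comap : N.colon {f.coeff d} ≤ P.comap C := by
    intro a ha
    by_contra haP
    refine hmin _ (eq_colon_singleton_mul_of_notMem hf haP) (?_ : ((C a * f).map π).natDegree < d)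
    have hne : (C a * f).map π ≠ 0 := by
      rw [Ne, map_quotientMk_eq_zero_iff, ← hmem]
      exact haP
    have hle : ((C a * f).map π).natDegree ≤ d := by
      rw [Polynomial.map_mul, map_C]
      exact natDegree_C_mul_le _ _
    refine lt_of_le_of_ne hle fun hd => hne (leadingCoeff_eq_zero.mp ?_)
    rw [leadingCoeff, hd, coeff_map, coeff_C_mul, Ideal.Quotient.eq_zero_iff_mem]
    rwa [Submodule.mem_colon_singleton, smul_eq_mul] at ha
  have hP_le : P ≤ (P.comap C).map C := by
    intro g hg
    induction hm : g.natDegree using Nat.strong_induction_on generalizing g with | _ m ih => ?_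
    have hlead : g.leadingCoeff ∈ P.comap C := by
      apply hle_comap
      have hgf : ((g * f).map π).coeff (m + d) = 0 := by
        rw [map_quotientMk_eq_zero_iff.mpr ((hmem g).mp hg), coeff_zero]
      rw [Polynomial.map_mul, coeff_mul_add_eq_of_natDegree_le (natDegree_map_le.trans hm.le)
        le_rfl, coeff_map, coeff_map, ← map_mul, Ideal.Quotient.eq_zero_iff_mem] at hgf
      rwa [Submodule.mem_colon_singleton, smul_eq_mul, leadingCoeff, hm]
    have hlead_term : C g.leadingCoeff * X ^ m ∈ (P.comap C).map C :=
      Ideal.mul_mem_right _ _ (Ideal.mem_map_of_mem _ hlead)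
    rw [← eraseLead_add_C_mul_X_pow g, hm]
    refine add_mem ?_ hlead_term
    rcases eraseLead_natDegree_lt_or_eraseLead_eq_zero g with hlt | h0
    · refine ih _ (hm ▸ hlt) ?_ rfl
      rw [← add_sub_cancel_right g.eraseLead (C g.leadingCoeff * X ^ m), ← hm,
        eraseLead_add_C_mul_X_pow]
      exact sub_mem hg (Ideal.map_comap_le (hm ▸ hlead_term))
    · rw [h0]
      exact zero_mem _
  exact ⟨f.coeff d, le_antisymm hcomap_le hle_comap, le_antisymm hP_le Ideal.map_comap_le⟩

theorem mem_associatedPrimes_quotient_map_C_iff [IsNoetherianRing A] {N : Ideal A}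
    {P : Ideal A[X]} :
    P ∈ associatedPrimes A[X] (A[X] ⧸ N.map C) ↔
      ∃ q ∈ associatedPrimes A (A ⧸ N), P = q.map C := by
  simp only [mem_associatedPrimes_quotient_iff]
  constructor
  · rintro ⟨hP, f, hf⟩
    obtain ⟨c, hc, hPq⟩ := exists_comap_C_eq_colon_of_eq_colon hf
    exact ⟨P.comap C, ⟨Ideal.comap_isPrime C P, c, hc⟩, hPq⟩
  · rintro ⟨q, ⟨hq, c, rfl⟩, rfl⟩
    exact ⟨Ideal.isPrime_map_C_of_isPrime, C c, map_C_colon_singleton N c⟩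

theorem _root_.NormallyTorsionFree.span_X_mul_map_C [IsDomain A] [IsNoetherianRing A]
    {I : Ideal A} (hI : NormallyTorsionFree I) :
    NormallyTorsionFree (Ideal.span {X} * I.map (C : A →+* A[X])) := by
  intro k hk P hP
  rcases eq_or_ne I ⊥ with rfl | hI0
  · rw [Ideal.map_bot, Ideal.mul_bot] at hP ⊢
    rwa [Ideal.bot_pow (by omega)] at hP
  rw [mul_pow, Ideal.span_singleton_pow, ← Ideal.map_pow] at hP
  have hX : (X : A[X]) ∈ A[X]⁰ := X_mem_nonzeroDivisors
  rcases associatedPrimes_quotient_span_mul_subset (pow_mem hX k) _ hP with hP | hP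
  · obtain ⟨q, hq, rfl⟩ := mem_associatedPrimes_quotient_map_C_iff.mp hP
    exact associatedPrimes_quotient_subset_span_mul hX (I.map C)
      (mem_associatedPrimes_quotient_map_C_iff.mpr ⟨q, hI k hk hq, rfl⟩)
  · rw [Set.mem_singleton_iff.mp (associatedPrimes_quotient_span_pow_subset prime_X k hP)]
    obtain ⟨c, hc, hc0⟩ := Submodule.exists_mem_ne_zero_of_ne_bot hI0
    exact span_singleton_mem_associatedPrimes_quotient_span_mul prime_X
      (Ideal.mem_map_of_mem C hc) (by rwa [X_dvd_iff, coeff_C_zero])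

end Polynomial

theorem comap_optionEquivLeft_span_X_mul_map_C {R σ : Type*} [CommRing R]
    (I : Ideal (MvPolynomial σ R)) :
    (Ideal.span {Polynomial.X} * I.map Polynomial.C).comap (optionEquivLeft R σ).toRingEquiv =
      Ideal.span {MvPolynomial.X none} * I.map (rename some) := by
  set e := (optionEquivLeft R σ).toRingEquiv
  have hC : (e.symm : Polynomial (MvPolynomial σ R) →+* MvPolynomial (Option σ) R).comp
      Polynomial.C = (rename some).toRingHom := by
    apply MvPolynomial.ringHom_ext <;> intro <;>
      simp [e, optionEquivLeft_symm_C_C, optionEquivLeft_symm_C_X]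
  rw [← Ideal.map_symm, Ideal.map_mul, Ideal.map_span, Set.image_singleton]
  congr 1
  · simp [e, optionEquivLeft_symm_X]
  · change _ = I.map (rename some).toRingHom
    rw [← hC, ← Ideal.map_map]
    rfl

theorem ntf_smul_new_variable_general {K : Type*} [Field K] {n : ℕ}
    (I : Ideal (MvPolynomial (Fin n) K))
    (hntf : NormallyTorsionFree I) :
    NormallyTorsionFree
      (Ideal.span {(X none : MvPolynomial (Option (Fin n)) K)} *
        Ideal.map (rename (Option.some : Fin n → Option (Fin n))) I) := by
  rw [← comap_optionEquivLeft_span_X_mul_map_C]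
  exact hntf.span_X_mul_map_C.comap_ringEquiv _

/-- If a monomial ideal `I ⊆ K[x_1,…,x_n]` is normally torsion-free, then so is
`x_w · I` in the polynomial ring with one extra variable `x_w` (here `x_w = X none`). -/
theorem ntf_smul_new_variable {K : Type*} [Field K] {n : ℕ}
    (I : Ideal (MvPolynomial (Fin n) K)) (hI : IsMonomialIdeal I)
    (hntf : NormallyTorsionFree I) :
    NormallyTorsionFree
      (Ideal.span {(X none : MvPolynomial (Option (Fin n)) K)} *
        Ideal.map (rename (Option.some : Fin n → Option (Fin n))) I) :=
  ntf_smul_new_variable_general I hntf
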